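/- Let C be a nonempty finite type, f : C → ℝ^n any function, P a Borel probability measure on ℝ^n, d : ℝ^n → ℝ^n → ℝ≥0∞ a Borel-measurable cost, and κ a Markov kernel from ℝ^n to C whose mixture ∫ κ(x, ·) dP(x) equals a probability measure γ on C. Then ∫ ∑_{c ∈ C} κ(x, {c}) · d(f c, x) dP(x) ≥ W_d(f#γ, P), the infimum of ∫ d(y, x) dπ(y, x) over all couplings π of f#γ and P. -/

import Mathlib

open MeasureTheory ProbabilityTheory ENNReal

/-- Kantorovich cost `W_c(μ, ν)`: the infimum of `∫ c(x, y) dπ(x, y)` over all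
probability measures `π` on the product whose first marginal is `μ` and whose
second marginal is `ν`. -/
noncomputable def Wcost {X Y : Type*} [MeasurableSpace X] [MeasurableSpace Y]
    (c : X → Y → ℝ≥0∞) (μ : Measure X) (ν : Measure Y) : ℝ≥0∞ :=
  ⨅ (π : Measure (X × Y)) (_ : IsProbabilityMeasure π)
    (_ : π.fst = μ) (_ : π.snd = ν), ∫⁻ p, c p.1 p.2 ∂π

section

variable {X Y Z : Type*} [MeasurableSpace X] [MeasurableSpace Y] [MeasurableSpace Z]

theorem Wcost_le_lintegral (c : X → Y → ℝ≥0∞) {μ : Measure X} {ν : Measure Y}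
    (π : Measure (X × Y)) [hπ : IsProbabilityMeasure π] (hfst : π.fst = μ) (hsnd : π.snd = ν) :
    Wcost c μ ν ≤ ∫⁻ p, c p.1 p.2 ∂π :=
  iInf_le_of_le π <| iInf_le_of_le hπ <| iInf_le_of_le hfst <| iInf_le _ hsnd

/-- The coupling of `g#(κ ∘ₘ μ)` and `μ` is the law of `(g z, x)` under `μ ⊗ₘ κ`. -/
theorem Wcost_map_comp_le_lintegral_lintegral (c : Y → X → ℝ≥0∞)
    (hc : Measurable (Function.uncurry c)) {g : Z → Y} (hg : Measurable g)
    (μ : Measure X) [IsProbabilityMeasure μ] (κ : Kernel X Z) [IsMarkovKernel κ] :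
    Wcost c ((κ ∘ₘ μ).map g) μ ≤ ∫⁻ x, ∫⁻ z, c (g z) x ∂κ x ∂μ := by
  have hcouple : Measurable fun p : X × Z => (g p.2, p.1) :=
    (hg.comp measurable_snd).prodMk measurable_fst
  have : IsProbabilityMeasure ((μ ⊗ₘ κ).map fun p => (g p.2, p.1)) :=
    Measure.isProbabilityMeasure_map hcouple.aemeasurable
  calc Wcost c ((κ ∘ₘ μ).map g) μ
      ≤ ∫⁻ p, c p.1 p.2 ∂(μ ⊗ₘ κ).map fun p => (g p.2, p.1) := by
        refine Wcost_le_lintegral c _ ?_ ?_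
        · rw [Measure.fst_map_prodMk measurable_fst, ← Measure.snd_compProd, Measure.snd,
            Measure.map_map hg measurable_snd]
          rfl
        · rw [Measure.snd_map_prodMk (X := fun p : X × Z => g p.2) (hg.comp measurable_snd)]
          exact Measure.fst_compProd μ κ
    _ = ∫⁻ x, ∫⁻ z, c (g z) x ∂κ x ∂μ := by
        rw [lintegral_map (f := fun p => c p.1 p.2) hc hcouple]
        exact Measure.lintegral_compProd (hc.comp hcouple)

end

theorem stmt13_general {n : ℕ} {C : Type*} [Fintype C]
    [MeasurableSpace C] [DiscreteMeasurableSpace C]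
    (f : C → EuclideanSpace ℝ (Fin n))
    (P : Measure (EuclideanSpace ℝ (Fin n))) [IsProbabilityMeasure P]
    (d : EuclideanSpace ℝ (Fin n) → EuclideanSpace ℝ (Fin n) → ℝ≥0∞)
    (hd : Measurable (Function.uncurry d))
    (κ : Kernel (EuclideanSpace ℝ (Fin n)) C) [IsMarkovKernel κ]
    (γ : Measure C)
    (hκ : P.bind (fun x => κ x) = γ) :
    (∫⁻ x, ∑ c, κ x {c} * d (f c) x ∂P) ≥ Wcost d (γ.map f) P := by
  subst hκ
  calc Wcost d ((κ ∘ₘ P).map f) P ≤ ∫⁻ x, ∫⁻ c, d (f c) x ∂κ x ∂P :=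
        Wcost_map_comp_le_lintegral_lintegral d hd (measurable_of_countable f) P κ
    _ = ∫⁻ x, ∑ c, κ x {c} * d (f c) x ∂P := by
        simp_rw [lintegral_fintype, mul_comm]

/-- **Eq. (52) in the proof of Theorem 1**: for a nonempty finite type `C`, a decoder
`f : C → ℝ^n`, a Borel probability measure `P` on `ℝ^n`, a Borel-measurable cost `d`,
and a Markov kernel `κ` from `ℝ^n` to `C` whose mixture under `P` equals `γ`, the
expected distortion `∫ ∑_c κ(x,{c}) · d(f c, x) dP(x)` dominates the Kantorovich cost
`W_d(f#γ, P)`. -/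
theorem stmt13 {n : ℕ} {C : Type*} [Fintype C] [Nonempty C]
    [MeasurableSpace C] [DiscreteMeasurableSpace C]
    (f : C → EuclideanSpace ℝ (Fin n))
    (P : Measure (EuclideanSpace ℝ (Fin n))) [IsProbabilityMeasure P]
    (d : EuclideanSpace ℝ (Fin n) → EuclideanSpace ℝ (Fin n) → ℝ≥0∞)
    (hd : Measurable (Function.uncurry d))
    (κ : Kernel (EuclideanSpace ℝ (Fin n)) C) [IsMarkovKernel κ]
    (γ : Measure C) [IsProbabilityMeasure γ]
    (hκ : P.bind (fun x => κ x) = γ) :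
    (∫⁻ x, ∑ c, κ x {c} * d (f c) x ∂P) ≥ Wcost d (γ.map f) P :=
  stmt13_general f P d hd κ γ hκ
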